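/- Let x^L < 0 < x^U and suppose x_c ∈ [0, x^U] satisfies 1 - tanh²(x_c) = (tanh(x_c) - tanh(x^L))/(x_c - x^L). Define F(x) = tanh(x^L) + ((tanh(x_c) - tanh(x^L))/(x_c - x^L))·(x - x^L) for x < x_c and F(x) = tanh(x) for x ≥ x_c. Then F is concave on [x^L, x^U] and F(x) ≥ tanh(x) for all x ∈ [x^L, x^U]. -/

import Mathlib

/-!
Write `ℓ` for the tangent line of `tanh` at `x_c`; the hypothesis on `x_c` says that `ℓ` also
passes through `(x^L, tanh x^L)`. Extending a concave function to the left of a point by its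
tangent line there keeps it concave, since the derivative stays antitone; as `tanh` is concave on
`[x_c, ∞)`, this gives concavity of `F`. For the overestimate on `[x^L, x_c]`: on `[0, x_c]` the
concave function `tanh` lies below its tangent `ℓ`, and on `[x^L, 0]` the convex function `tanh`
lies below its chord, which lies below `ℓ` because `tanh x^L = ℓ x^L` and `tanh 0 ≤ ℓ 0`.
-/

open Real Set

namespace Real

theorem hasDerivAt_tanh (x : ℝ) : HasDerivAt tanh (1 - tanh x ^ 2) x := by
  have h := (hasDerivAt_sinh x).div (hasDerivAt_cosh x) (cosh_pos x).ne'
  rw [show sinh / cosh = tanh from funext fun y => (tanh_eq_sinh_div_cosh y).symm] at h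
  refine h.congr_deriv ?_
  rw [tanh_eq_sinh_div_cosh]
  field_simp

theorem deriv_tanh : deriv tanh = fun x => 1 - tanh x ^ 2 :=
  funext fun x => (hasDerivAt_tanh x).deriv

theorem differentiable_tanh : Differentiable ℝ tanh :=
  fun x => (hasDerivAt_tanh x).differentiableAt

theorem strictMono_tanh : StrictMono tanh :=
  strictMono_of_deriv_pos fun x => by
    rw [deriv_tanh]
    linarith [tanh_sq_lt_one x]

theorem convexOn_tanh_Iic : ConvexOn ℝ (Iic 0) tanh := by
  refine MonotoneOn.convexOn_of_deriv (convex_Iic 0) differentiable_tanh.continuous.continuousOn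
    differentiable_tanh.differentiableOn ?_
  rw [interior_Iic, deriv_tanh]
  intro a _ b hb hab
  have hb0 : tanh b ≤ 0 := tanh_zero ▸ strictMono_tanh.monotone (le_of_lt hb)
  have hab' : tanh a ≤ tanh b := strictMono_tanh.monotone hab
  dsimp only
  nlinarith

theorem concaveOn_tanh_Ici : ConcaveOn ℝ (Ici 0) tanh := by
  refine AntitoneOn.concaveOn_of_deriv (convex_Ici 0) differentiable_tanh.continuous.continuousOn
    differentiable_tanh.differentiableOn ?_
  rw [interior_Ici, deriv_tanh]
  intro a ha b _ hab
  have ha0 : 0 ≤ tanh a := tanh_zero ▸ strictMono_tanh.monotone (le_of_lt ha)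
  have hab' : tanh a ≤ tanh b := strictMono_tanh.monotone hab
  dsimp only
  nlinarith

end Real

section TangentLine

variable {f : ℝ → ℝ} {s : Set ℝ} {a b c d x : ℝ}

theorem ConcaveOn.le_tangentLine (hf : ConcaveOn ℝ s f) (hx : x ∈ s) (hc : c ∈ s)
    (hd : HasDerivAt f d c) : f x ≤ f c + d * (x - c) := by
  rcases lt_trichotomy x c with hxc | rfl | hcx
  · have := hf.le_slope_of_hasDerivAt hx hc hxc hd
    rw [slope_def_field, le_div_iff₀ (sub_pos.2 hxc)] at this
    linarith
  · simp
  · have := hf.slope_le_of_hasDerivAt hc hx hcx hd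
    rw [slope_def_field, div_le_iff₀ (sub_pos.2 hcx)] at this
    linarith

theorem ConvexOn.le_affine_of_mem_Icc (hf : ConvexOn ℝ s f) (ha : a ∈ s) (hb : b ∈ s)
    (hfa : f a ≤ f c + d * (a - c)) (hfb : f b ≤ f c + d * (b - c)) (hx : x ∈ Icc a b) :
    f x ≤ f c + d * (x - c) := by
  have hline : ConcaveOn ℝ s fun y => f c + d * (y - c) :=
    (((LinearMap.mulLeft ℝ d).concaveOn hf.1).add_const (f c - d * c)).congr fun y _ => by
      simp only [Pi.add_apply, LinearMap.mulLeft_apply]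
      ring
  have := (hf.sub hline).le_max_of_mem_Icc ha hb hx
  simp only [Pi.sub_apply] at this
  linarith [max_le (sub_nonpos.2 hfa) (sub_nonpos.2 hfb)]

theorem le_tangentLine_of_convexOn_Iic_of_concaveOn_Ici (hconv : ConvexOn ℝ (Iic 0) f)
    (hconc : ConcaveOn ℝ (Ici 0) f) (hc : 0 ≤ c) (hd : HasDerivAt f d c)
    (ha : f a = f c + d * (a - c)) (hx : x ∈ Icc a c) : f x ≤ f c + d * (x - c) := by
  rcases le_or_gt 0 x with hx0 | hx0
  · exact hconc.le_tangentLine hx0 hc hd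
  · exact hconv.le_affine_of_mem_Icc (hx.1.trans hx0.le) self_mem_Iic ha.le
      (hconc.le_tangentLine self_mem_Ici hc hd) ⟨hx.1, hx0.le⟩

theorem HasDerivAt.ite_lt {g : ℝ → ℝ} (hf : HasDerivAt f d c) (hg : HasDerivAt g d c)
    (hfg : f c = g c) : HasDerivAt (fun x => if x < c then f x else g x) d c := by
  have hleft : HasDerivWithinAt (fun x => if x < c then f x else g x) d (Iic c) c := by
    refine hf.hasDerivWithinAt.congr (fun x hx => ?_) (by simp [hfg])
    rcases (mem_Iic.1 hx).lt_or_eq with hxc | rfl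
    · simp [hxc]
    · simp [hfg]
  have hright : HasDerivWithinAt (fun x => if x < c then f x else g x) d (Ici c) c :=
    hg.hasDerivWithinAt.congr (fun x hx => by simp [not_lt.2 (mem_Ici.1 hx)]) (by simp)
  simpa [Iic_union_Ici] using hleft.union hright

theorem concaveOn_univ_ite_tangentLine (hf : Differentiable ℝ f) (hconc : ConcaveOn ℝ (Ici c) f) :
    ConcaveOn ℝ univ fun x => if x < c then f c + deriv f c * (x - c) else f x := by
  have hline (x : ℝ) : HasDerivAt (fun y => f c + deriv f c * (y - c)) (deriv f c) x := by
    simpa using (((hasDerivAt_id x).sub_const c).const_mul (deriv f c)).const_add (f c)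
  have hderiv (x : ℝ) : HasDerivAt (fun x => if x < c then f c + deriv f c * (x - c) else f x)
      (if x < c then deriv f c else deriv f x) x := by
    rcases lt_trichotomy x c with hxc | rfl | hcx
    · rw [if_pos hxc]
      refine (hline x).congr_of_eventuallyEq ?_
      filter_upwards [Iio_mem_nhds hxc] with y hy
      exact if_pos hy
    · rw [if_neg (lt_irrefl x)]
      exact (hline x).ite_lt (hf x).hasDerivAt (by simp)
    · rw [if_neg (not_lt.2 hcx.le)]
      refine (hf x).hasDerivAt.congr_of_eventuallyEq ?_
      filter_upwards [Ioi_mem_nhds hcx] with y hy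
      exact if_neg (not_lt.2 (le_of_lt hy))
  refine Antitone.concaveOn_univ_of_deriv (fun x => (hderiv x).differentiableAt) ?_
  have hanti := hconc.antitoneOn_deriv fun x _ => hf x
  intro x y hxy
  rw [(hderiv x).deriv, (hderiv y).deriv]
  split_ifs with hy hx hx
  · rfl
  · exact absurd (hxy.trans_lt hy) hx
  · exact hanti self_mem_Ici (not_lt.1 hy) (not_lt.1 hy)
  · exact hanti (not_lt.1 hx) (not_lt.1 hy) hxy

end TangentLine

theorem tanh_concave_envelope_general (xL xU xc : ℝ) (h1 : xL < 0)
    (hc : xc ∈ Set.Icc 0 xU)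
    (htan : 1 - Real.tanh xc ^ 2 = (Real.tanh xc - Real.tanh xL) / (xc - xL))
    (F : ℝ → ℝ)
    (hF : ∀ x, F x = if x < xc then
        Real.tanh xL + ((Real.tanh xc - Real.tanh xL) / (xc - xL)) * (x - xL)
      else Real.tanh x) :
    ConcaveOn ℝ (Set.Icc xL xU) F ∧ ∀ x ∈ Set.Icc xL xU, Real.tanh x ≤ F x := by
  have hslope : (tanh xc - tanh xL) / (xc - xL) * (xc - xL) = tanh xc - tanh xL :=
    div_mul_cancel₀ _ (by linarith [hc.1])
  have hline (x : ℝ) : tanh xL + (tanh xc - tanh xL) / (xc - xL) * (x - xL)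
      = tanh xc + deriv tanh xc * (x - xc) := by
    rw [(hasDerivAt_tanh xc).deriv, htan]
    linear_combination hslope
  have hFeq : F = fun x => if x < xc then tanh xc + deriv tanh xc * (x - xc) else tanh x :=
    funext fun x => by rw [hF, hline]
  subst hFeq
  refine ⟨?_, fun x hx => ?_⟩
  · have hconc : ConcaveOn ℝ (Ici xc) tanh :=
      concaveOn_tanh_Ici.subset (Ici_subset_Ici.2 hc.1) (convex_Ici xc)
    exact (concaveOn_univ_ite_tangentLine differentiable_tanh hconc).subset (subset_univ _)
      (convex_Icc xL xU)
  · dsimp only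
    split_ifs with hxc
    · exact le_tangentLine_of_convexOn_Iic_of_concaveOn_Ici convexOn_tanh_Iic concaveOn_tanh_Ici
        hc.1 (differentiable_tanh xc).hasDerivAt (by simpa using hline xL) ⟨hx.1, hxc.le⟩
    · rfl

theorem tanh_concave_envelope (xL xU xc : ℝ) (h1 : xL < 0) (h2 : 0 < xU)
    (hc : xc ∈ Set.Icc 0 xU)
    (htan : 1 - Real.tanh xc ^ 2 = (Real.tanh xc - Real.tanh xL) / (xc - xL))
    (F : ℝ → ℝ)
    (hF : ∀ x, F x = if x < xc then
        Real.tanh xL + ((Real.tanh xc - Real.tanh xL) / (xc - xL)) * (x - xL)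
      else Real.tanh x) :
    ConcaveOn ℝ (Set.Icc xL xU) F ∧ ∀ x ∈ Set.Icc xL xU, Real.tanh x ≤ F x :=
  tanh_concave_envelope_general xL xU xc h1 hc htan F hF
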